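/- Let $\rho_p > 0$, $\nu_p \in \mathbb{R}$, $\tilde\nu_c \geq 0$, $\tilde\rho_c \in \mathbb{R}$, $\alpha, \gamma > 0$, $\delta_p \in (0,1]$. Suppose $\tilde\rho_c + \nu_p - |\nu_p| - \frac{1}{2\alpha} \geq 0$. Then for all vectors $w, y_p, \tilde y_c, e_p \in \mathbb{R}^m$ with $\|e_p\|_2^2 \leq \delta_p \|y_p\|_2^2$: $(w - \tilde y_c)^T y_p - \nu_p \|w - \tilde y_c\|_2^2 - \rho_p \|y_p\|_2^2 + (y_p - e_p)^T \tilde y_c - \tilde\nu_c \|y_p - e_p\|_2^2 - \tilde\rho_c \|\tilde y_c\|_2^2 \leq (\gamma + |\nu_p| - \nu_p)\|w\|_2^2 - (\rho_p - \tfrac{\delta_p \alpha}{2} - \tfrac{1}{4\gamma})\|y_p\|_2^2$. -/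

import Mathlib

/-! Expand both supply rates. The cross terms `⟪yc, yp⟫` cancel, so only three quantities
remain to be bounded: `⟪w, yp⟫` by Young's inequality with weight `γ`, `-⟪ep, yc⟫` by Young's
inequality with weight `α / 2` together with the triggering bound `‖ep‖² ≤ δp ‖yp‖²`, and
`-νp ‖w - yc‖²` by `(|νp| - νp)(‖w‖² + ‖yc‖²)`. The `‖yc‖²` terms so produced are absorbed
by `ρc ‖yc‖²` thanks to the stability margin, and `νc ‖yp - ep‖² ≥ 0` is dropped. -/

section InnerProductSpace

open scoped InnerProductSpace

variable {F : Type*} [NormedAddCommGroup F] [InnerProductSpace ℝ F]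

theorem real_inner_le_mul_norm_sq_add {ε : ℝ} (hε : 0 < ε) (x y : F) :
    ⟪x, y⟫_ℝ ≤ ε * ‖x‖ ^ 2 + 1 / (4 * ε) * ‖y‖ ^ 2 := by
  have young : ε * ‖x‖ ^ 2 + 1 / (4 * ε) * ‖y‖ ^ 2 - ‖x‖ * ‖y‖
      = (2 * ε * ‖x‖ - ‖y‖) ^ 2 / (4 * ε) := by
    field_simp; ring
  have : 0 ≤ (2 * ε * ‖x‖ - ‖y‖) ^ 2 / (4 * ε) := by positivity
  linarith [real_inner_le_norm x y]

end InnerProductSpace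

section SeminormedAddCommGroup

variable {E : Type*} [SeminormedAddCommGroup E]

theorem norm_sub_sq_le_two_mul_add (x y : E) :
    ‖x - y‖ ^ 2 ≤ 2 * ‖x‖ ^ 2 + 2 * ‖y‖ ^ 2 := by
  nlinarith [norm_sub_le x y, norm_nonneg (x - y), sq_nonneg (‖x‖ - ‖y‖)]

theorem neg_mul_norm_sub_sq_le (ν : ℝ) (x y : E) :
    -(ν * ‖x - y‖ ^ 2) ≤ (|ν| - ν) * (‖x‖ ^ 2 + ‖y‖ ^ 2) := by
  rcases le_or_gt 0 ν with hν | hν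
  · rw [abs_of_nonneg hν]
    nlinarith [mul_nonneg hν (sq_nonneg ‖x - y‖)]
  · rw [abs_of_neg hν]
    nlinarith [mul_le_mul_of_nonneg_left (norm_sub_sq_le_two_mul_add x y) (neg_nonneg.2 hν.le)]

end SeminormedAddCommGroup

theorem stmt_11_general (m : ℕ) (ρp νp νc ρc α γ δp : ℝ)
    (hνc : 0 ≤ νc) (hα : 0 < α) (hγ : 0 < γ)
    (hstab : 0 ≤ ρc + νp - |νp| - 1 / (2 * α)) :
    ∀ w yp yc ep : EuclideanSpace ℝ (Fin m), ‖ep‖ ^ 2 ≤ δp * ‖yp‖ ^ 2 →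
      (inner ℝ (w - yc) yp : ℝ) - νp * ‖w - yc‖ ^ 2 - ρp * ‖yp‖ ^ 2
        + (inner ℝ (yp - ep) yc : ℝ) - νc * ‖yp - ep‖ ^ 2 - ρc * ‖yc‖ ^ 2
      ≤ (γ + |νp| - νp) * ‖w‖ ^ 2 - (ρp - δp * α / 2 - 1 / (4 * γ)) * ‖yp‖ ^ 2 := by
  intro w yp yc ep hep
  have young_w := real_inner_le_mul_norm_sq_add hγ w yp
  have young_ep := real_inner_le_mul_norm_sq_add (half_pos hα) (-ep) yc
  rw [inner_neg_left, norm_neg, show 1 / (4 * (α / 2)) = 1 / (2 * α) by ring] at young_ep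
  have trigger : α / 2 * ‖ep‖ ^ 2 ≤ α / 2 * (δp * ‖yp‖ ^ 2) :=
    mul_le_mul_of_nonneg_left hep (half_pos hα).le
  have hνp := neg_mul_norm_sub_sq_le νp w yc
  have hνc_term : 0 ≤ νc * ‖yp - ep‖ ^ 2 := by positivity
  have margin : 0 ≤ (ρc + νp - |νp| - 1 / (2 * α)) * ‖yc‖ ^ 2 := by positivity
  rw [inner_sub_left, inner_sub_left, real_inner_comm yc yp]
  linarith

theorem stmt_11 (m : ℕ) (ρp νp νc ρc α γ δp : ℝ)
    (hρp : 0 < ρp) (hνc : 0 ≤ νc) (hα : 0 < α) (hγ : 0 < γ)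
    (hδ0 : 0 < δp) (hδ1 : δp ≤ 1)
    (hstab : 0 ≤ ρc + νp - |νp| - 1 / (2 * α)) :
    ∀ w yp yc ep : EuclideanSpace ℝ (Fin m), ‖ep‖ ^ 2 ≤ δp * ‖yp‖ ^ 2 →
      (inner ℝ (w - yc) yp : ℝ) - νp * ‖w - yc‖ ^ 2 - ρp * ‖yp‖ ^ 2
        + (inner ℝ (yp - ep) yc : ℝ) - νc * ‖yp - ep‖ ^ 2 - ρc * ‖yc‖ ^ 2
      ≤ (γ + |νp| - νp) * ‖w‖ ^ 2 - (ρp - δp * α / 2 - 1 / (4 * γ)) * ‖yp‖ ^ 2 :=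
  stmt_11_general m ρp νp νc ρc α γ δp hνc hα hγ hstab
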